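/- arXiv:2403.03067 — 3 statements merged into one kernel-verified Lean document; each statement's English description precedes it below -/
import Mathlib

section
/- Let T be a binary tree, B a deterministic bottom-up tree automaton selecting leaf sets, and (v,q) an active configuration. Then the set S^a(v,q) of nonempty leaf sets S of T(v) with B(T(v),S) = q decomposes as the disjoint union, over all useful configurations (v',q') reachable from (v,q) in the unary-path graph T ⊗ B, of the sets S^u(v',q'). -/
/-- Vertex-labelled binary trees: leaves labelled `σ0`, internal vertices `σ2`. -/
inductive BTree (σ0 σ2 : Type*) where
  | leaf : σ0 → BTree σ0 σ2
  | node : σ2 → BTree σ0 σ2 → BTree σ0 σ2 → BTree σ0 σ2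

/-- Subtree at a position (word over `{ℓ,r}`, `false` = left, `true` = right). -/
def subtreeAt {σ0 σ2 : Type*} : BTree σ0 σ2 → List Bool → Option (BTree σ0 σ2)
  | t, [] => some t
  | BTree.leaf _, _ :: _ => none
  | BTree.node _ l r, d :: ds => subtreeAt (if d then r else l) ds

open scoped Classical in
/-- The state of the dBUTA `(δ0, δ2)` on a tree sitting at absolute position `p`, where
the selection `S` (a set of absolute leaf positions) marks leaves with `1`. -/
noncomputable def run {σ0 σ2 Q : Type*} (δ0 : σ0 → Bool → Q) (δ2 : Q → Q → σ2 → Q)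
    (S : Set (List Bool)) : BTree σ0 σ2 → List Bool → Q
  | BTree.leaf a, p => δ0 a (if p ∈ S then true else false)
  | BTree.node f l r, p =>
      δ2 (run δ0 δ2 S l (p ++ [false])) (run δ0 δ2 S r (p ++ [true])) f

/-- The leaves of the subtree `T(p)`, as absolute positions of `T`. -/
def LeavesBelow {σ0 σ2 : Type*} (T : BTree σ0 σ2) (p : List Bool) : Set (List Bool) :=
  {w | p <+: w ∧ ∃ a, subtreeAt T w = some (BTree.leaf a)}

/-- `S^a(v,q)`: the nonempty leaf selections `S` of `T(v)` with `B(T(v),S) = q`. -/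
def Sa {σ0 σ2 Q : Type*} (δ0 : σ0 → Bool → Q) (δ2 : Q → Q → σ2 → Q)
    (T : BTree σ0 σ2) (p : List Bool) (q : Q) : Set (Set (List Bool)) :=
  {S | S.Nonempty ∧ S ⊆ LeavesBelow T p ∧
    ∃ t, subtreeAt T p = some t ∧ run δ0 δ2 S t p = q}

/-- `(v,q) ∈ Conf^∅(T)`: the empty selection evaluates to `q` on `T(v)`. -/
def ConfEmpty {σ0 σ2 Q : Type*} (δ0 : σ0 → Bool → Q) (δ2 : Q → Q → σ2 → Q)
    (T : BTree σ0 σ2) (p : List Bool) (q : Q) : Prop :=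
  ∃ t, subtreeAt T p = some t ∧ run δ0 δ2 (∅ : Set (List Bool)) t p = q

/-- `(v,q)` is an active configuration. -/
def ConfA {σ0 σ2 Q : Type*} (δ0 : σ0 → Bool → Q) (δ2 : Q → Q → σ2 → Q)
    (T : BTree σ0 σ2) (p : List Bool) (q : Q) : Prop :=
  (Sa δ0 δ2 T p q).Nonempty

/-- `S^u(v,q)`: the selections in `S^a(v,q)` hitting the leaves of every child of `v`. -/
def Su {σ0 σ2 Q : Type*} (δ0 : σ0 → Bool → Q) (δ2 : Q → Q → σ2 → Q)
    (T : BTree σ0 σ2) (p : List Bool) (q : Q) : Set (Set (List Bool)) :=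
  {S | S ∈ Sa δ0 δ2 T p q ∧
    ∀ d : Bool, (subtreeAt T (p ++ [d])).isSome →
      (S ∩ LeavesBelow T (p ++ [d])).Nonempty}

/-- `(v,q)` is a useful configuration. -/
def ConfU {σ0 σ2 Q : Type*} (δ0 : σ0 → Bool → Q) (δ2 : Q → Q → σ2 → Q)
    (T : BTree σ0 σ2) (p : List Bool) (q : Q) : Prop :=
  (Su δ0 δ2 T p q).Nonempty

/-- The edge relation of the unary-path graph `T ⊗ B` on active configurations:
`(u,p) → (v,q)` if `v` is a child of `u`, the sibling of `v` carries a `Conf^∅`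
configuration, and the transition of `B` at `u` yields the state of `(u,p)`. -/
def TBedge {σ0 σ2 Q : Type*} (δ0 : σ0 → Bool → Q) (δ2 : Q → Q → σ2 → Q)
    (T : BTree σ0 σ2) : (List Bool × Q) → (List Bool × Q) → Prop :=
  fun x y => ∃ (f : σ2) (l r : BTree σ0 σ2) (d : Bool) (q'' : Q),
    subtreeAt T x.1 = some (BTree.node f l r) ∧ y.1 = x.1 ++ [d] ∧
    ConfA δ0 δ2 T x.1 x.2 ∧ ConfA δ0 δ2 T y.1 y.2 ∧
    ConfEmpty δ0 δ2 T (x.1 ++ [!d]) q'' ∧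
    (if d then δ2 q'' y.2 f else δ2 y.2 q'' f) = x.2

section Helpers

variable {σ0 σ2 Q : Type*} (δ0 : σ0 → Bool → Q) (δ2 : Q → Q → σ2 → Q)

lemma subtreeAt_append (T : BTree σ0 σ2) (p w : List Bool) :
    subtreeAt T (p ++ w) = (subtreeAt T p).bind (fun t => subtreeAt t w) := by
  induction p generalizing T with
  | nil => simp [subtreeAt]
  | cons d ds ih =>
    cases T with
    | leaf a => simp [subtreeAt]
    | node f l r => simp only [List.cons_append, subtreeAt]; exact ih _

lemma subtreeAt_child {T : BTree σ0 σ2} {p : List Bool} {f l r}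
    (h : subtreeAt T p = some (BTree.node f l r)) (d : Bool) :
    subtreeAt T (p ++ [d]) = some (if d then r else l) := by
  rw [subtreeAt_append, h]; cases d <;> simp [subtreeAt]

lemma run_congr (S S' : Set (List Bool)) (t : BTree σ0 σ2) (p : List Bool)
    (h : ∀ w, p <+: w → (w ∈ S ↔ w ∈ S')) :
    run δ0 δ2 S t p = run δ0 δ2 S' t p := by
  classical
  induction t generalizing p with
  | leaf a => simp only [run]; rw [if_congr (h p (List.prefix_refl p)) rfl rfl]
  | node f l r ihl ihr =>
    simp only [run]
    rw [ihl _ (fun w hw => ((List.prefix_append p [false]).trans hw) |> h w),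
        ihr _ (fun w hw => ((List.prefix_append p [true]).trans hw) |> h w)]

lemma prefix_clash {p w : List Bool} {b : Bool} (h1 : p ++ [b] <+: w)
    (h2 : p ++ [!b] <+: w) : False := by
  obtain ⟨s1, rfl⟩ := h1
  obtain ⟨s2, h⟩ := h2
  have h' : p ++ ((!b) :: s2) = p ++ (b :: s1) := by simpa [List.append_assoc] using h
  have := List.append_cancel_left h'
  cases b <;> simp_all

lemma leavesBelow_child_subset (T : BTree σ0 σ2) (p : List Bool) (d : Bool) :
    LeavesBelow T (p ++ [d]) ⊆ LeavesBelow T p :=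
  fun _ hw => ⟨(List.prefix_append p [d]).trans hw.1, hw.2⟩

lemma leavesBelow_node {T : BTree σ0 σ2} {p : List Bool} {f l r}
    (h : subtreeAt T p = some (BTree.node f l r)) :
    LeavesBelow T p = LeavesBelow T (p ++ [false]) ∪ LeavesBelow T (p ++ [true]) := by
  ext w
  constructor
  · rintro ⟨⟨u, rfl⟩, a, ha⟩
    rw [subtreeAt_append, h] at ha
    cases u with
    | nil => simp [subtreeAt] at ha
    | cons d u' =>
      have hmem : p ++ d :: u' ∈ LeavesBelow T (p ++ [d]) := by
        refine ⟨⟨u', by simp⟩, a, ?_⟩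
        rw [show p ++ d :: u' = (p ++ [d]) ++ u' by simp,
          subtreeAt_append, subtreeAt_child h d]
        simpa [subtreeAt] using ha
      cases d
      · exact Or.inl hmem
      · exact Or.inr hmem
  · rintro (h'|h') <;> exact leavesBelow_child_subset T p _ h'

/-- Transporting an `Sa` membership backwards across one edge. -/
lemma edge_back {T : BTree σ0 σ2} {x y : List Bool × Q} {S : Set (List Bool)}
    (h : TBedge δ0 δ2 T x y) (hS : S ∈ Sa δ0 δ2 T y.1 y.2) :
    S ∈ Sa δ0 δ2 T x.1 x.2 := by
  obtain ⟨f, l, r, d, q'', hT, hy1, -, -, ⟨t'', ht'', hrun''⟩, hδ⟩ := h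
  obtain ⟨hne, hsub, t', ht', hrunS⟩ := hS
  rw [hy1] at hsub ht'
  have ht'eq : t' = if d then r else l := by
    have := (subtreeAt_child hT d).symm.trans ht'
    exact (Option.some_injective _ this).symm
  have ht''eq : t'' = if !d then r else l := by
    have := (subtreeAt_child hT (!d)).symm.trans ht''
    exact (Option.some_injective _ this).symm
  have hsib : run δ0 δ2 S (if !d then r else l) (x.1 ++ [!d])
      = run δ0 δ2 (∅ : Set (List Bool)) (if !d then r else l) (x.1 ++ [!d]) := by
    apply run_congr
    intro w hw
    simp only [Set.mem_empty_iff_false, iff_false]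
    intro hwS
    exact prefix_clash (hsub hwS).1 hw
  refine ⟨hne, fun w hw => leavesBelow_child_subset T x.1 d (hsub hw),
    BTree.node f l r, hT, ?_⟩
  have hrunS' : run δ0 δ2 S (if d then r else l) (x.1 ++ [d]) = y.2 := by
    rw [← ht'eq, ← hy1]; exact hrunS
  have hrun''2 : run δ0 δ2 S (if !d then r else l) (x.1 ++ [!d]) = q'' := by
    rw [hsib, ← ht''eq]; exact hrun''
  cases d with
  | false =>
    simp at hrunS' hrun''2 hδ
    simp only [run]
    rw [hrunS', hrun''2]
    exact hδ
  | true =>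
    simp at hrunS' hrun''2 hδ
    simp only [run]
    rw [hrunS', hrun''2]
    exact hδ

lemma chain_back {T : BTree σ0 σ2} {x y : List Bool × Q} {S : Set (List Bool)}
    (h : Relation.ReflTransGen (TBedge δ0 δ2 T) x y)
    (hS : S ∈ Sa δ0 δ2 T y.1 y.2) : S ∈ Sa δ0 δ2 T x.1 x.2 := by
  induction h using Relation.ReflTransGen.head_induction_on with
  | refl => exact hS
  | head h₁ _ ih => exact edge_back δ0 δ2 h₁ ih

/-- The forward direction: from any `Sa` membership we can descend to a `Su` membership. -/
lemma forward {T : BTree σ0 σ2} {S : Set (List Bool)} (t : BTree σ0 σ2) :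
    ∀ p q, subtreeAt T p = some t → S ∈ Sa δ0 δ2 T p q →
    ∃ p' q', Relation.ReflTransGen (TBedge δ0 δ2 T) (p, q) (p', q') ∧
      S ∈ Su δ0 δ2 T p' q' := by
  induction t with
  | leaf a =>
    intro p q ht hS
    refine ⟨p, q, Relation.ReflTransGen.refl, hS, ?_⟩
    intro d hd
    rw [subtreeAt_append, ht] at hd
    simp [subtreeAt] at hd
  | node f l r ihl ihr =>
    intro p q ht hS
    obtain ⟨hne, hsub, t', ht', hrunS⟩ := hS
    have ht'eq : t' = BTree.node f l r := Option.some_injective _ (ht'.symm.trans ht)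
    subst ht'eq
    have hdecomp := leavesBelow_node ht
    by_cases hL : (S ∩ LeavesBelow T (p ++ [false])).Nonempty
    · by_cases hR : (S ∩ LeavesBelow T (p ++ [true])).Nonempty
      · -- both children hit: already useful
        refine ⟨p, q, Relation.ReflTransGen.refl,
          ⟨⟨hne, hsub, BTree.node f l r, ht, hrunS⟩, ?_⟩⟩
        intro d _
        cases d
        · exact hL
        · exact hR
      · -- S ⊆ left leaves
        have hSL : S ⊆ LeavesBelow T (p ++ [false]) := by
          intro w hw
          rcases hdecomp ▸ hsub hw with h' | h'
          · exact h'
          · exact absurd ⟨w, hw, h'⟩ hR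
        have hqL : S ∈ Sa δ0 δ2 T (p ++ [false]) (run δ0 δ2 S l (p ++ [false])) :=
          ⟨hne, hSL, l, subtreeAt_child ht false, rfl⟩
        have hsib : run δ0 δ2 S r (p ++ [true])
            = run δ0 δ2 (∅ : Set (List Bool)) r (p ++ [true]) := by
          apply run_congr
          intro w hw
          simp only [Set.mem_empty_iff_false, iff_false]
          intro hwS
          exact prefix_clash (b := false) (hSL hwS).1 (by simpa using hw)
        have hedge : TBedge δ0 δ2 T (p, q) (p ++ [false], run δ0 δ2 S l (p ++ [false])) := by
          refine ⟨f, l, r, false, run δ0 δ2 (∅ : Set (List Bool)) r (p ++ [true]),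
            ht, rfl, ⟨S, hne, hsub, BTree.node f l r, ht, hrunS⟩, ⟨S, hqL⟩,
            ⟨r, by simpa using subtreeAt_child ht true, by simp⟩, ?_⟩
          simp only [if_neg Bool.false_ne_true, if_false]
          rw [← hsib]
          simpa [run] using hrunS
        obtain ⟨p', q', hchain, hSu⟩ :=
          ihl (p ++ [false]) _ (subtreeAt_child ht false) hqL
        exact ⟨p', q', Relation.ReflTransGen.head hedge hchain, hSu⟩
    · -- S ⊆ right leaves
      have hSR : S ⊆ LeavesBelow T (p ++ [true]) := by
        intro w hw
        rcases hdecomp ▸ hsub hw with h' | h'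
        · exact absurd ⟨w, hw, h'⟩ hL
        · exact h'
      have hqR : S ∈ Sa δ0 δ2 T (p ++ [true]) (run δ0 δ2 S r (p ++ [true])) :=
        ⟨hne, hSR, r, subtreeAt_child ht true, rfl⟩
      have hsib : run δ0 δ2 S l (p ++ [false])
          = run δ0 δ2 (∅ : Set (List Bool)) l (p ++ [false]) := by
        apply run_congr
        intro w hw
        simp only [Set.mem_empty_iff_false, iff_false]
        intro hwS
        exact prefix_clash (b := true) (hSR hwS).1 (by simpa using hw)
      have hedge : TBedge δ0 δ2 T (p, q) (p ++ [true], run δ0 δ2 S r (p ++ [true])) := by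
        refine ⟨f, l, r, true, run δ0 δ2 (∅ : Set (List Bool)) l (p ++ [false]),
          ht, rfl, ⟨S, hne, hsub, BTree.node f l r, ht, hrunS⟩, ⟨S, hqR⟩,
          ⟨l, by simpa using subtreeAt_child ht false, by simp⟩, ?_⟩
        simp only [if_true]
        rw [← hsib]
        simpa [run] using hrunS
      obtain ⟨p', q', hchain, hSu⟩ :=
        ihr (p ++ [true]) _ (subtreeAt_child ht true) hqR
      exact ⟨p', q', Relation.ReflTransGen.head hedge hchain, hSu⟩

/-- Distinct useful configurations have disjoint `Su` sets (given a common prefix). -/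
lemma disj_aux {T : BTree σ0 σ2} {p₁ p₂ : List Bool} {q₁ q₂ : Q} {S : Set (List Bool)}
    (h1 : S ∈ Su δ0 δ2 T p₁ q₁) (h2 : S ∈ Su δ0 δ2 T p₂ q₂)
    (hpre : p₁ <+: p₂) : (p₁, q₁) = (p₂, q₂) := by
  obtain ⟨⟨hne1, hsub1, t₁, ht₁, hr₁⟩, hhit1⟩ := h1
  obtain ⟨⟨hne2, hsub2, t₂, ht₂, hr₂⟩, hhit2⟩ := h2
  by_cases hp : p₁ = p₂
  · subst hp
    have : t₁ = t₂ := Option.some_injective _ (ht₁.symm.trans ht₂)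
    subst this
    rw [hr₁.symm.trans hr₂]
  · obtain ⟨u, rfl⟩ := hpre
    cases u with
    | nil => simp at hp
    | cons d u' =>
      -- subtree at p₁ is a node
      have hbind : subtreeAt T (p₁ ++ [d]) ≠ none := by
        intro hnone
        have : subtreeAt T (p₁ ++ d :: u') = none := by
          rw [show p₁ ++ d :: u' = (p₁ ++ [d]) ++ u' by simp, subtreeAt_append, hnone]
          rfl
        rw [ht₂] at this; exact Option.some_ne_none _ this
      have hnode : ∃ f l r, subtreeAt T p₁ = some (BTree.node f l r) := by
        rw [subtreeAt_append] at hbind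
        cases ht : subtreeAt T p₁ with
        | none => rw [ht] at hbind; exact absurd rfl hbind
        | some t =>
          cases t with
          | leaf a => rw [ht] at hbind; simp [subtreeAt] at hbind
          | node f l r => exact ⟨_, _, _, rfl⟩
      obtain ⟨f, l, r, hN⟩ := hnode
      have hsome : (subtreeAt T (p₁ ++ [!d])).isSome := by
        rw [subtreeAt_child hN (!d)]; rfl
      obtain ⟨x, hxS, hxL⟩ := hhit1 (!d) hsome
      have hxd : p₁ ++ [d] <+: x := by
        have := (hsub2 hxS).1
        exact List.IsPrefix.trans ⟨u', by simp⟩ this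
      exact absurd (prefix_clash hxd hxL.1) not_false

end Helpers

/-- for an active configuration `(v,q)`, the set `S^a(v,q)` is the disjoint
union, over the useful configurations `(v',q')` reachable from `(v,q)` in `T ⊗ B`, of
the sets `S^u(v',q')`. -/
theorem stmt8 {σ0 σ2 Q : Type*} (δ0 : σ0 → Bool → Q) (δ2 : Q → Q → σ2 → Q)
    (T : BTree σ0 σ2) (p : List Bool) (q : Q) (hact : ConfA δ0 δ2 T p q) :
    (∀ S, S ∈ Sa δ0 δ2 T p q ↔ ∃ p' q',
        Relation.ReflTransGen (TBedge δ0 δ2 T) (p, q) (p', q') ∧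
        ConfU δ0 δ2 T p' q' ∧ S ∈ Su δ0 δ2 T p' q') ∧
    (∀ p₁ q₁ p₂ q₂,
        Relation.ReflTransGen (TBedge δ0 δ2 T) (p, q) (p₁, q₁) → ConfU δ0 δ2 T p₁ q₁ →
        Relation.ReflTransGen (TBedge δ0 δ2 T) (p, q) (p₂, q₂) → ConfU δ0 δ2 T p₂ q₂ →
        (p₁, q₁) ≠ (p₂, q₂) →
        Disjoint (Su δ0 δ2 T p₁ q₁) (Su δ0 δ2 T p₂ q₂)) := by
  constructor
  · intro S
    constructor
    · intro hS
      obtain ⟨t, ht, -⟩ := hS.2.2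
      obtain ⟨p', q', hchain, hSu⟩ := forward δ0 δ2 t p q ht hS
      exact ⟨p', q', hchain, ⟨S, hSu⟩, hSu⟩
    · rintro ⟨p', q', hchain, -, hSu⟩
      exact chain_back δ0 δ2 hchain hSu.1
  · intro p₁ q₁ p₂ q₂ h1 hu1 h2 hu2 hne
    rw [Set.disjoint_left]
    intro S hS1 hS2
    apply hne
    obtain ⟨w, hw⟩ := hS1.1.1
    have hw1 : p₁ <+: w := (hS1.1.2.1 hw).1
    have hw2 : p₂ <+: w := (hS2.1.2.1 hw).1
    rcases List.prefix_or_prefix_of_prefix hw1 hw2 with hpre | hpre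
    · exact disj_aux δ0 δ2 hS1 hS2 hpre
    · exact (disj_aux δ0 δ2 hS2 hS1 hpre).symm
end

section
/- Let π and π' be paths in a DAG D (not necessarily starting at the same vertex) with the same terminal vertex. Then the subtrees of the unfoldings rooted at π and π' are isomorphic as vertex-labelled (and decorated) trees: unfold_D(v0)(π) ≅ unfold_D(v0')(π') where v0, v0' are the start vertices of π, π'. -/
/-- A path in a DAG, starting at a vertex, given as the list of (edge index, next vertex)
steps; the vertices of `unfold_D(v)` are exactly the paths starting at `v`. -/
def IsPath {V I : Type*} (E : V → I → V → Prop) : V → List (I × V) → Prop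
  | _, [] => True
  | v, (i, w) :: rest => E v i w ∧ IsPath E w rest

/-- The terminal vertex `ω(π)` of a path. -/
def pathEnd {V I : Type*} : V → List (I × V) → V
  | v, [] => v
  | _, (_, w) :: rest => pathEnd w rest

theorem pathEnd_append {V I : Type*} (v : V) (π ρ : List (I × V)) :
    pathEnd v (π ++ ρ) = pathEnd (pathEnd v π) ρ := by
  induction π generalizing v with
  | nil => rfl
  | cons p rest ih => exact ih p.2

theorem isPath_append {V I : Type*} (E : V → I → V → Prop) (v : V) (π ρ : List (I × V)) :
    IsPath E v (π ++ ρ) ↔ IsPath E v π ∧ IsPath E (pathEnd v π) ρ := by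
  induction π generalizing v with
  | nil => simp [IsPath, pathEnd]
  | cons p rest ih =>
    simp only [List.cons_append, IsPath, pathEnd, and_assoc]
    exact and_congr_right fun _ => ih _

/-- if `π` (from `v₀`) and `π'` (from `v₀'`) are paths in a DAG with the
same terminal vertex, then the subtrees of the unfoldings `unfold_D(v₀)` and
`unfold_D(v₀')` rooted at `π` and `π'` are isomorphic as labelled and decorated trees:
the map `π·ρ ↦ π'·ρ` is a bijection between the two subtrees preserving the edge
structure, the vertex labels and the edge decorations (both inherited from the terminal
vertices). -/
theorem stmt12 {V I σ M : Type*} (E : V → I → V → Prop)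
    (lab : V → σ) (γ : V → I → V → M)
    (v₀ v₀' : V) (π π' : List (I × V))
    (h : IsPath E v₀ π) (h' : IsPath E v₀' π')
    (hterm : pathEnd v₀ π = pathEnd v₀' π') :
    (∀ ρ, IsPath E v₀ (π ++ ρ) ↔ IsPath E v₀' (π' ++ ρ)) ∧
    (∀ ρ, pathEnd v₀ (π ++ ρ) = pathEnd v₀' (π' ++ ρ)) ∧
    (∀ ρ, lab (pathEnd v₀ (π ++ ρ)) = lab (pathEnd v₀' (π' ++ ρ))) ∧
    (∀ ρ (i : I) (w : V),
      γ (pathEnd v₀ (π ++ ρ)) i w = γ (pathEnd v₀' (π' ++ ρ)) i w) := by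
  refine ⟨fun ρ => ?_, fun ρ => ?_, fun ρ => ?_, fun ρ i w => ?_⟩ <;>
    simp [isPath_append, pathEnd_append, hterm, h, h']
end

section
/- In the free monoid setting, the multiset of path labels from a source vertex s to a target set V0 in a DAG is preserved under contracting chains of outdegree-one vertices: replacing every maximal path u → f(u) through outdegree-one vertices by a single edge labelled with the concatenation of the edge labels along it yields a DAG D' with the same multiset { γ(π) : π ∈ path(s, V0) } (for s not of outdegree one). -/
/-- A DAG with functional indexed edges: `E v i` is the target of the `i`-th outgoing
edge of `v` (if any). `v` has outdegree zero. -/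
def OutNone {V I : Type*} (E : V → I → Option V) (v : V) : Prop := ∀ i, E v i = none

/-- `v` has outdegree one: exactly one outgoing edge. -/
def Out1 {V I : Type*} (E : V → I → Option V) (v : V) : Prop :=
  ∃! i : I, (E v i).isSome

/-- The vertex reached from `v` along a word of edge indices, if the word is a path. -/
def pathTo {V I : Type*} (E : V → I → Option V) : V → List I → Option V
  | v, [] => some v
  | v, i :: is => match E v i with
    | some w => pathTo E w is
    | none => none

/-- The label `γ(π)` of a path: the concatenation of its edge labels (labels are words
of length at most one over `Σ`, i.e. elements of `Σ ∪ {ε}`). -/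
def pathLab {V I α : Type*} (E : V → I → Option V) (γ : V → I → List α) :
    V → List I → List α
  | _, [] => []
  | v, i :: is => γ v i ++ (match E v i with
    | some w => pathLab E γ w is
    | none => [])

open scoped Classical in
/-- The edge map of the contracted DAG `D'`: every edge `(v,i,u)` with `u` of outdegree
one is redirected to `f(u)`, the unique vertex of outdegree `≠ 1` reached from `u`
through outdegree-one vertices. -/
noncomputable def contractE {V I : Type*} (E : V → I → Option V) (F : V → V)
    (v : V) (i : I) : Option V :=
  (E v i).map (fun u => if Out1 E u then F u else u)

open scoped Classical in
/-- The edge labels of the contracted DAG `D'`: the label of a redirected edge is the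
original label followed by the label of the contracted chain `π_u`. -/
noncomputable def contractLab {V I α : Type*} (E : V → I → Option V)
    (γ : V → I → List α) (P : V → List I) (v : V) (i : I) : List α :=
  γ v i ++ (match E v i with
    | some u => if Out1 E u then pathLab E γ u (P u) else []
    | none => [])

section Aux
variable {V I α : Type*}

open scoped Classical in
noncomputable def fmap (E : V → I → Option V) (F : V → V) (P : V → List I) :
    V → List I → List I
  | _, [] => []
  | v, i :: is =>
    match E v i with
    | some u => i :: (if Out1 E u then fmap E F P (F u) (is.drop (P u).length)
        else fmap E F P u is)
    | none => []
termination_by v is => is.length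
decreasing_by
  · simp [List.length_drop]
  · simp

open scoped Classical in
noncomputable def gmap (E : V → I → Option V) (F : V → V) (P : V → List I) :
    V → List I → List I
  | _, [] => []
  | v, j :: js =>
    match E v j with
    | some u => j :: (if Out1 E u then P u ++ gmap E F P (F u) js
        else gmap E F P u js)
    | none => []

variable {E : V → I → Option V} {F : V → V} {P : V → List I} {γ : V → I → List α}

lemma pathTo_append {v m : V} {as : List I} (h : pathTo E v as = some m) (bs : List I) :
    pathTo E v (as ++ bs) = pathTo E m bs := by
  induction as generalizing v with
  | nil => simp [pathTo] at h; subst h; simp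
  | cons i as ih =>
    cases hE : E v i with
    | none => simp [pathTo, hE] at h
    | some u => simp [pathTo, hE] at h ⊢; exact ih h

lemma pathLab_append {v m : V} {as : List I} (h : pathTo E v as = some m) (bs : List I) :
    pathLab E γ v (as ++ bs) = pathLab E γ v as ++ pathLab E γ m bs := by
  induction as generalizing v with
  | nil => simp [pathTo] at h; subst h; simp [pathLab]
  | cons i as ih =>
    cases hE : E v i with
    | none => simp [pathTo, hE] at h
    | some u => simp [pathTo, pathLab, hE] at h ⊢; exact ih h

section withFP
variable (hFP : ∀ u, Out1 E u → ∀ i w, E u i = some w →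
      ((Out1 E w → F u = F w ∧ P u = i :: P w) ∧
       (¬ Out1 E w → F u = w ∧ P u = [i])))
include hFP

lemma lemA : ∀ n u, (P u).length ≤ n → Out1 E u →
    pathTo E u (P u) = some (F u) ∧ ¬ Out1 E (F u) := by
  intro n
  induction n with
  | zero =>
    intro u hlen h1
    obtain ⟨i, hi, -⟩ := id h1
    obtain ⟨w, hw⟩ := Option.isSome_iff_exists.mp hi
    by_cases h2 : Out1 E w
    · have := ((hFP u h1 i w hw).1 h2).2; simp [this] at hlen
    · have := ((hFP u h1 i w hw).2 h2).2; simp [this] at hlen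
  | succ n ih =>
    intro u hlen h1
    obtain ⟨i, hi, -⟩ := id h1
    obtain ⟨w, hw⟩ := Option.isSome_iff_exists.mp hi
    by_cases h2 : Out1 E w
    · obtain ⟨hF, hP⟩ := (hFP u h1 i w hw).1 h2
      have hlen' : (P w).length ≤ n := by rw [hP] at hlen; simpa using hlen
      obtain ⟨ha, hb⟩ := ih w hlen' h2
      refine ⟨?_, by rw [hF]; exact hb⟩
      rw [hP]; simp [pathTo, hw]; rw [ha, hF]
    · obtain ⟨hF, hP⟩ := (hFP u h1 i w hw).2 h2
      rw [hP, hF]; exact ⟨by simp [pathTo, hw], h2⟩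

lemma lemA' {u : V} (h1 : Out1 E u) :
    pathTo E u (P u) = some (F u) ∧ ¬ Out1 E (F u) :=
  lemA hFP (P u).length u le_rfl h1

lemma lemB : ∀ is : List I, ∀ u w, Out1 E u → pathTo E u is = some w → ¬ Out1 E w →
    ∃ rest, is = P u ++ rest ∧ pathTo E (F u) rest = some w := by
  intro is
  induction is with
  | nil =>
    intro u w h1 hp hw
    simp [pathTo] at hp; subst hp; exact absurd h1 hw
  | cons i is ih =>
    intro u w h1 hp hw
    cases hE : E u i with
    | none => simp [pathTo, hE] at hp
    | some v =>
      simp [pathTo, hE] at hp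
      by_cases h2 : Out1 E v
      · obtain ⟨hF, hP⟩ := (hFP u h1 i v hE).1 h2
        obtain ⟨rest, h3, h4⟩ := ih v w h2 hp hw
        exact ⟨rest, by rw [hP, h3]; simp, by rw [hF]; exact h4⟩
      · obtain ⟨hF, hP⟩ := (hFP u h1 i v hE).2 h2
        exact ⟨is, by rw [hP]; simp, by rw [hF]; exact hp⟩

lemma lemB_drop {is : List I} {u w : V} (h1 : Out1 E u) (hp : pathTo E u is = some w)
    (hw : ¬ Out1 E w) :
    is = P u ++ is.drop (P u).length ∧ pathTo E (F u) (is.drop (P u).length) = some w := by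
  obtain ⟨rest, h3, h4⟩ := lemB hFP is u w h1 hp hw
  have : is.drop (P u).length = rest := by rw [h3]; simp
  rw [this]; exact ⟨h3, h4⟩

lemma lem1 : ∀ n (is : List I), is.length ≤ n → ∀ v w, pathTo E v is = some w →
    ¬ Out1 E w →
    pathTo (contractE E F) v (fmap E F P v is) = some w ∧
    pathLab E γ v is = pathLab (contractE E F) (contractLab E γ P) v (fmap E F P v is) := by
  intro n
  induction n with
  | zero =>
    intro is hlen v w hp hw
    rw [List.length_eq_zero_iff.mp (Nat.le_zero.mp hlen)] at hp ⊢
    simp [pathTo] at hp; subst hp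
    exact ⟨by simp [fmap, pathTo], by simp [fmap, pathLab]⟩
  | succ n ih =>
    intro is hlen v w hp hw
    cases is with
    | nil =>
      simp [pathTo] at hp; subst hp
      exact ⟨by simp [fmap, pathTo], by simp [fmap, pathLab]⟩
    | cons i is =>
      cases hE : E v i with
      | none => simp [pathTo, hE] at hp
      | some u =>
        simp [pathTo, hE] at hp
        by_cases h1 : Out1 E u
        · obtain ⟨hdec, hrest⟩ := lemB_drop hFP h1 hp hw
          have hlen' : (is.drop (P u).length).length ≤ n := by
            simp only [List.length_drop]
            simp only [List.length_cons] at hlen; omega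
          obtain ⟨ihA, ihB⟩ := ih _ hlen' (F u) w hrest hw
          constructor
          · simp only [fmap, hE, h1, if_true]
            simp [pathTo, contractE, hE, h1]
            exact ihA
          · simp only [fmap, hE, h1, if_true]
            simp only [pathLab, pathTo, contractE, contractLab, hE, h1, if_true,
              Option.map_some]
            rw [List.append_assoc]
            congr 1
            conv_lhs => rw [hdec]
            rw [pathLab_append (lemA' hFP h1).1]
            rw [ihB]
        · have hlen' : is.length ≤ n := by simpa using hlen
          obtain ⟨ihA, ihB⟩ := ih _ hlen' u w hp hw
          constructor
          · simp only [fmap, hE, h1, if_false]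
            simp [pathTo, contractE, hE, h1]
            exact ihA
          · simp only [fmap, hE, h1, if_false]
            simp only [pathLab, pathTo, contractE, contractLab, hE, h1, if_false,
              Option.map_some]
            simp [ihB]

lemma lem2 : ∀ js : List I, ∀ v w, pathTo (contractE E F) v js = some w →
    pathTo E v (gmap E F P v js) = some w := by
  intro js
  induction js with
  | nil => intro v w hp; simpa [pathTo, gmap] using hp
  | cons j js ih =>
    intro v w hp
    cases hE : E v j with
    | none => simp [pathTo, contractE, hE] at hp
    | some u =>
      simp [pathTo, contractE, hE] at hp
      by_cases h1 : Out1 E u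
      · rw [if_pos h1] at hp
        simp only [gmap, hE, h1, if_true]
        simp only [pathTo, hE]
        rw [pathTo_append (lemA' hFP h1).1]
        exact ih _ _ hp
      · rw [if_neg h1] at hp
        simp only [gmap, hE, h1, if_false]
        simp only [pathTo, hE]
        exact ih _ _ hp

lemma lem3 : ∀ n (is : List I), is.length ≤ n → ∀ v w, pathTo E v is = some w →
    ¬ Out1 E w → gmap E F P v (fmap E F P v is) = is := by
  intro n
  induction n with
  | zero =>
    intro is hlen v w hp hw
    rw [List.length_eq_zero_iff.mp (Nat.le_zero.mp hlen)]
    simp [fmap, gmap]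
  | succ n ih =>
    intro is hlen v w hp hw
    cases is with
    | nil => simp [fmap, gmap]
    | cons i is =>
      cases hE : E v i with
      | none => simp [pathTo, hE] at hp
      | some u =>
        simp [pathTo, hE] at hp
        by_cases h1 : Out1 E u
        · obtain ⟨hdec, hrest⟩ := lemB_drop hFP h1 hp hw
          have hlen' : (is.drop (P u).length).length ≤ n := by
            simp only [List.length_drop]
            simp only [List.length_cons] at hlen; omega
          simp only [fmap, hE, h1, if_true, gmap]
          rw [ih _ hlen' (F u) w hrest hw]
          rw [← hdec]
        · have hlen' : is.length ≤ n := by simpa using hlen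
          simp only [fmap, hE, h1, if_false, gmap]
          rw [ih _ hlen' u w hp hw]

lemma lem4 : ∀ js : List I, ∀ v w, pathTo (contractE E F) v js = some w →
    ¬ Out1 E w → fmap E F P v (gmap E F P v js) = js := by
  intro js
  induction js with
  | nil => intro v w hp hw; simp [fmap, gmap]
  | cons j js ih =>
    intro v w hp hw
    cases hE : E v j with
    | none => simp [pathTo, contractE, hE] at hp
    | some u =>
      simp [pathTo, contractE, hE] at hp
      by_cases h1 : Out1 E u
      · rw [if_pos h1] at hp
        simp only [gmap, hE, h1, if_true, fmap]
        congr 1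
        rw [List.drop_left]
        exact ih _ _ hp hw
      · rw [if_neg h1] at hp
        simp only [gmap, hE, h1, if_false, fmap]
        congr 1
        exact ih _ _ hp hw

end withFP
end Aux

/-- contracting chains of outdegree-one vertices preserves the multiset of
path labels from a source `s` (not of outdegree one) to a target set `V₀` of vertices of
outdegree zero: there is a bijection between the `s`-to-`V₀` paths of `D` and those of
the contracted DAG `D'` preserving the path labels. Here `F u = f(u)` and `P u = π_u`
are characterised by their defining recursion along outdegree-one chains. -/
theorem stmt15 {V I α : Type*} (E : V → I → Option V) (γ : V → I → List α)
    (V₀ : Set V) (s : V) (F : V → V) (P : V → List I)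
    (hV₀ : ∀ w ∈ V₀, OutNone E w)
    (hs : ¬ Out1 E s)
    (hFP : ∀ u, Out1 E u → ∀ i w, E u i = some w →
      ((Out1 E w → F u = F w ∧ P u = i :: P w) ∧
       (¬ Out1 E w → F u = w ∧ P u = [i]))) :
    ∃ e : {is : List I // ∃ w ∈ V₀, pathTo E s is = some w} ≃
          {is : List I // ∃ w ∈ V₀, pathTo (contractE E F) s is = some w},
      ∀ p, pathLab E γ s p.1 = pathLab (contractE E F) (contractLab E γ P) s (e p).1 := by
  have noOut1 : ∀ w ∈ V₀, ¬ Out1 E w := by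
    intro w hw h1
    obtain ⟨i, hi, -⟩ := h1
    rw [hV₀ w hw i] at hi
    simp at hi
  refine ⟨{
    toFun := fun p => ⟨fmap E F P s p.1, by
      obtain ⟨w, hw, hp⟩ := p.2
      exact ⟨w, hw, (lem1 (γ := γ) hFP _ _ le_rfl s w hp (noOut1 w hw)).1⟩⟩
    invFun := fun q => ⟨gmap E F P s q.1, by
      obtain ⟨w, hw, hp⟩ := q.2
      exact ⟨w, hw, lem2 hFP _ _ _ hp⟩⟩
    left_inv := fun p => by
      obtain ⟨w, hw, hp⟩ := p.2
      exact Subtype.ext (lem3 hFP _ _ le_rfl s w hp (noOut1 w hw))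
    right_inv := fun q => by
      obtain ⟨w, hw, hp⟩ := q.2
      exact Subtype.ext (lem4 hFP _ _ _ hp (noOut1 w hw)) }, ?_⟩
  intro p
  obtain ⟨w, hw, hp⟩ := p.2
  exact (lem1 hFP _ _ le_rfl s w hp (noOut1 w hw)).2
end
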